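/- arXiv:cs/0109006 — 2 statements merged into one kernel-verified Lean document; each statement's English description precedes it below -/
import Mathlib

section
/- Update answer sets violate postulate (U3): there exist single programs P_1 and P_2, each individually satisfiable (having an answer set), such that the update sequence (P_1, P_2) has no update answer set. Witness: P_1 = { a ← b, not a } and P_2 = { b ← }. -/
/-- A literal over atoms `α`: an atom or a strongly negated atom. -/
inductive Lit (α : Type) where
  | pos : α → Lit α
  | neg : α → Lit α

/-- The complementary literal. -/
def Lit.compl {α : Type} : Lit α → Lit α
  | .pos a => .neg a
  | .neg a => .pos a

/-- A rule of an extended logic program: optional head literal,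
prerequisites `prem`, and weakly negated body literals `nbody`. -/
structure Rule (α : Type) where
  head : Option (Lit α)
  prem : Set (Lit α)
  nbody : Set (Lit α)

/-- A set of literals is consistent iff it contains no complementary pair. -/
def Consistent {α : Type} (S : Set (Lit α)) : Prop :=
  ∀ a : α, ¬ (Lit.pos a ∈ S ∧ Lit.neg a ∈ S)

/-- The body of `r` is true in `S`. -/
def BodyTrue {α : Type} (S : Set (Lit α)) (r : Rule α) : Prop :=
  r.prem ⊆ S ∧ ∀ L ∈ r.nbody, L ∉ S

/-- The head of `r` is true in `S` (false for constraints). -/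
def HeadTrue {α : Type} (S : Set (Lit α)) (r : Rule α) : Prop :=
  ∃ L, r.head = some L ∧ L ∈ S

/-- Rule `r` is true in `S`. -/
def RuleTrue {α : Type} (S : Set (Lit α)) (r : Rule α) : Prop :=
  BodyTrue S r → HeadTrue S r

/-- `S` is a model of program `P`. -/
def IsModel {α : Type} (S : Set (Lit α)) (P : Set (Rule α)) : Prop :=
  ∀ r ∈ P, RuleTrue S r

/-- `r` is defeated by `S`. -/
def Defeated {α : Type} (S : Set (Lit α)) (r : Rule α) : Prop :=
  ∃ L ∈ r.nbody, L ∈ S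

/-- The Gelfond–Lifschitz reduct of `P` relative to `S`. -/
def Reduct {α : Type} (P : Set (Rule α)) (S : Set (Lit α)) : Set (Rule α) :=
  { r' | ∃ r ∈ P, ¬ Defeated S r ∧ r' = Rule.mk r.head r.prem ∅ }

/-- `S` is an answer set of `P`: a consistent set of literals that is a
minimal model of the reduct `P^S`. -/
def IsAnswerSet {α : Type} (P : Set (Rule α)) (S : Set (Lit α)) : Prop :=
  Consistent S ∧ IsModel S (Reduct P S) ∧
    ∀ T ⊆ S, IsModel T (Reduct P S) → T = S

/-- The belief set of `P`: all rules true in every answer set of `P`. -/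
def Bel {α : Type} (P : Set (Rule α)) : Set (Rule α) :=
  { r | ∀ S, IsAnswerSet P S → RuleTrue S r }
/-- Extended alphabet `At*`: original atoms, indexed copies `A_i`,
and rejection atoms `rej(r)` for (named copies of) rules. -/
inductive ExtAtom (α : Type) where
  | base : α → ExtAtom α
  | idx : ℕ → α → ExtAtom α
  | rej : ℕ → Rule α → ExtAtom α

/-- Lift a literal over `α` to the corresponding literal over `At*`. -/
def liftLit {α : Type} : Lit α → Lit (ExtAtom α)
  | .pos a => .pos (.base a)
  | .neg a => .neg (.base a)

/-- The indexed copy `L_i` of a literal `L`. -/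
def idxLit {α : Type} (i : ℕ) : Lit α → Lit (ExtAtom α)
  | .pos a => .pos (.idx i a)
  | .neg a => .neg (.idx i a)

/-- Literal `L` occurs in the update sequence `(P 0, …, P (n-1))`. -/
def OccursIn {α : Type} (n : ℕ) (P : ℕ → Set (Rule α)) (L : Lit α) : Prop :=
  ∃ i < n, ∃ r ∈ P i, r.head = some L ∨ L ∈ r.prem ∨ L ∈ r.nbody

/-- The update program `P_◁` of the update sequence `(P 0, …, P (n-1))`,
an ELP over the extended alphabet `At*`. -/
def UpdProgram {α : Type} (n : ℕ) (P : ℕ → Set (Rule α)) : Set (Rule (ExtAtom α)) :=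
  -- (i) all constraints
  { r' | ∃ i < n, ∃ r ∈ P i, r.head = none ∧
      r' = Rule.mk none (liftLit '' r.prem) (liftLit '' r.nbody) } ∪
  -- (ii)  L_i ← B(r), not rej(r)
  { r' | ∃ i < n, ∃ r ∈ P i, ∃ L, r.head = some L ∧
      r' = Rule.mk (some (idxLit i L)) (liftLit '' r.prem)
             ((liftLit '' r.nbody) ∪ {Lit.pos (ExtAtom.rej i r)}) } ∪
  -- (iii)  rej(r) ← B(r), ¬L_{i+1}
  { r' | ∃ i, i + 1 < n ∧ ∃ r ∈ P i, ∃ L, r.head = some L ∧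
      r' = Rule.mk (some (Lit.pos (ExtAtom.rej i r)))
             ((liftLit '' r.prem) ∪ {idxLit (i+1) L.compl}) (liftLit '' r.nbody) } ∪
  -- (iv) inertia rules  L_i ← L_{i+1}  and  L ← L_1
  { r' | ∃ L, OccursIn n P L ∧
      ((∃ i, i + 1 < n ∧ r' = Rule.mk (some (idxLit i L)) {idxLit (i+1) L} ∅) ∨
        r' = Rule.mk (some (liftLit L)) {idxLit 0 L} ∅) }

/-- `S` is an update answer set of the sequence `(P 0, …, P (n-1))`:
the restriction to `Lit_At` of an answer set of the update program. -/
def UpdateAnswerSet {α : Type} (n : ℕ) (P : ℕ → Set (Rule α)) (S : Set (Lit α)) : Prop :=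
  ∃ S' : Set (Lit (ExtAtom α)), IsAnswerSet (UpdProgram n P) S' ∧
    S = { L | liftLit L ∈ S' }

/-- Two rules are conflicting iff their heads are complementary literals. -/
def Conflicting {α : Type} (r r' : Rule α) : Prop :=
  ∃ L, r.head = some L ∧ r'.head = some L.compl

/-- The founded rejection set at level `i`: rules of `P i` rejected by a
conflicting, itself non-rejected rule of some later program. -/
def RejLevel {α : Type} (n : ℕ) (P : ℕ → Set (Rule α)) (S : Set (Lit α)) (i : ℕ) :
    Set (Rule α) :=
  { r | r ∈ P i ∧ ∃ j, ∃ _ : i < j, ∃ _ : j < n, ∃ r',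
      r' ∈ P j ∧ r' ∉ RejLevel n P S j ∧
      Conflicting r r' ∧ BodyTrue S r ∧ BodyTrue S r' }
  termination_by n - i
  decreasing_by omega

/-- The founded rejection set `Rej(S, P⃗)`. -/
def Rej {α : Type} (n : ℕ) (P : ℕ → Set (Rule α)) (S : Set (Lit α)) : Set (Rule α) :=
  { r | ∃ i < n, r ∈ RejLevel n P S i }

/-- The union `∪P⃗` of all rules of the sequence. -/
def UnionSeq {α : Type} (n : ℕ) (P : ℕ → Set (Rule α)) : Set (Rule α) :=
  { r | ∃ i < n, r ∈ P i }

/-- Witness program `P_1 = { a ← b, not a }` (atom `a` is `true`, `b` is `false`). -/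
def P1w : Set (Rule Bool) :=
  {Rule.mk (some (Lit.pos true)) {Lit.pos false} {Lit.pos true}}

/-- Witness program `P_2 = { b ← }`. -/
def P2w : Set (Rule Bool) :=
  {Rule.mk (some (Lit.pos false)) ∅ ∅}


section Aux

/-- Supportedness: every literal of an answer set needs a generating rule. -/
lemma support {α : Type} {P : Set (Rule α)} {S : Set (Lit α)}
    (h : IsAnswerSet P S) {L : Lit α} (hL : L ∈ S) :
    ∃ r ∈ P, ¬ Defeated S r ∧ r.head = some L ∧ r.prem ⊆ S \ {L} := by
  obtain ⟨hcons, hmod, hmin⟩ := h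
  by_contra hno
  push_neg at hno
  have hModT : IsModel (S \ {L}) (Reduct P S) := by
    rintro r' ⟨r, hrP, hnd, rfl⟩ hb
    obtain ⟨hprem, -⟩ := hb
    have hS : RuleTrue S (Rule.mk r.head r.prem ∅) := hmod _ ⟨r, hrP, hnd, rfl⟩
    have hbS : BodyTrue S (Rule.mk r.head r.prem ∅) :=
      ⟨fun x hx => (hprem hx).1, fun x hx => absurd hx (Set.notMem_empty x)⟩
    obtain ⟨L', hhead, hL'⟩ := hS hbS
    by_cases hLL : L' = L
    · subst hLL
      exact absurd hprem (hno r hrP hnd hhead)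
    · exact ⟨L', hhead, hL', fun hx => hLL hx⟩
  have heq := hmin _ Set.diff_subset hModT
  rw [← heq] at hL
  exact hL.2 rfl

/-- Modelhood: an undefeated rule with true prerequisites fires. -/
lemma fires {α : Type} {P : Set (Rule α)} {S : Set (Lit α)}
    (h : IsAnswerSet P S) {r : Rule α} (hr : r ∈ P) (hnd : ¬ Defeated S r)
    (hp : r.prem ⊆ S) {L : Lit α} (hh : r.head = some L) : L ∈ S := by
  have hS : RuleTrue S (Rule.mk r.head r.prem ∅) := h.2.1 _ ⟨r, hr, hnd, rfl⟩
  have hbS : BodyTrue S (Rule.mk r.head r.prem ∅) :=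
    ⟨hp, fun x hx => absurd hx (Set.notMem_empty x)⟩
  obtain ⟨L', hhead, hL'⟩ := hS hbS
  have : L' = L := by
    have : some L' = some L := hhead ▸ hh
    exact Option.some.inj this.symm ▸ rfl
  exact this ▸ hL'

def Pw : ℕ → Set (Rule Bool) := fun i => if i = 0 then P1w else P2w

def rr1 : Rule Bool := Rule.mk (some (Lit.pos true)) {Lit.pos false} {Lit.pos true}
def rr2 : Rule Bool := Rule.mk (some (Lit.pos false)) ∅ ∅

def R1 : Rule (ExtAtom Bool) :=
  Rule.mk (some (Lit.pos (ExtAtom.idx 0 true))) {Lit.pos (ExtAtom.base false)}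
    ({Lit.pos (ExtAtom.base true)} ∪ {Lit.pos (ExtAtom.rej 0 rr1)})
def R2 : Rule (ExtAtom Bool) :=
  Rule.mk (some (Lit.pos (ExtAtom.idx 1 false))) ∅ {Lit.pos (ExtAtom.rej 1 rr2)}
def R3 : Rule (ExtAtom Bool) :=
  Rule.mk (some (Lit.pos (ExtAtom.rej 0 rr1)))
    ({Lit.pos (ExtAtom.base false)} ∪ {Lit.neg (ExtAtom.idx 1 true)})
    {Lit.pos (ExtAtom.base true)}
def RA1 : Rule (ExtAtom Bool) :=
  Rule.mk (some (Lit.pos (ExtAtom.idx 0 true))) {Lit.pos (ExtAtom.idx 1 true)} ∅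
def RB1 : Rule (ExtAtom Bool) :=
  Rule.mk (some (Lit.pos (ExtAtom.idx 0 false))) {Lit.pos (ExtAtom.idx 1 false)} ∅
def RA2 : Rule (ExtAtom Bool) :=
  Rule.mk (some (Lit.pos (ExtAtom.base true))) {Lit.pos (ExtAtom.idx 0 true)} ∅
def RB2 : Rule (ExtAtom Bool) :=
  Rule.mk (some (Lit.pos (ExtAtom.base false))) {Lit.pos (ExtAtom.idx 0 false)} ∅

lemma occ_pos_true : OccursIn 2 Pw (Lit.pos true) :=
  ⟨0, by norm_num, rr1, rfl, Or.inl rfl⟩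

lemma occ_pos_false : OccursIn 2 Pw (Lit.pos false) :=
  ⟨1, by norm_num, rr2, rfl, Or.inl rfl⟩

lemma memR1 : R1 ∈ UpdProgram 2 Pw := by
  apply Set.mem_union_left; apply Set.mem_union_left; apply Set.mem_union_right
  exact ⟨0, by norm_num, rr1, rfl, Lit.pos true, rfl, by
    simp [R1, rr1, liftLit, idxLit, Set.image_singleton]⟩

lemma memR2 : R2 ∈ UpdProgram 2 Pw := by
  apply Set.mem_union_left; apply Set.mem_union_left; apply Set.mem_union_right
  exact ⟨1, by norm_num, rr2, rfl, Lit.pos false, rfl, by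
    simp [R2, rr2, liftLit, idxLit, Set.image_empty]⟩

lemma memR3 : R3 ∈ UpdProgram 2 Pw := by
  apply Set.mem_union_left; apply Set.mem_union_right
  exact ⟨0, by norm_num, rr1, rfl, Lit.pos true, rfl, by
    simp [R3, rr1, liftLit, idxLit, Lit.compl, Set.image_singleton]⟩

lemma memRA1 : RA1 ∈ UpdProgram 2 Pw := by
  apply Set.mem_union_right
  exact ⟨Lit.pos true, occ_pos_true, Or.inl ⟨0, by norm_num, by
    simp [RA1, idxLit]⟩⟩

lemma memRB1 : RB1 ∈ UpdProgram 2 Pw := by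
  apply Set.mem_union_right
  exact ⟨Lit.pos false, occ_pos_false, Or.inl ⟨0, by norm_num, by
    simp [RB1, idxLit]⟩⟩

lemma memRA2 : RA2 ∈ UpdProgram 2 Pw := by
  apply Set.mem_union_right
  exact ⟨Lit.pos true, occ_pos_true, Or.inr (by simp [RA2, liftLit, idxLit])⟩

lemma memRB2 : RB2 ∈ UpdProgram 2 Pw := by
  apply Set.mem_union_right
  exact ⟨Lit.pos false, occ_pos_false, Or.inr (by simp [RB2, liftLit, idxLit])⟩

lemma occ_char {L : Lit Bool} (h : OccursIn 2 Pw L) :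
    L = Lit.pos true ∨ L = Lit.pos false := by
  obtain ⟨i, hi, r, hr, hc⟩ := h
  interval_cases i
  · have hr' : r = rr1 := by simpa [Pw, P1w, rr1] using hr
    subst hr'
    simp only [rr1, Set.mem_singleton_iff, Option.some.injEq] at hc
    rcases hc with h | h | h
    · exact Or.inl h.symm
    · exact Or.inr h
    · exact Or.inl h
  · have hr' : r = rr2 := by simpa [Pw, P2w, rr2] using hr
    subst hr'
    simp only [rr2, Set.mem_empty_iff_false, Option.some.injEq, or_false] at hc
    exact Or.inr hc.symm

lemma mem_upd {r' : Rule (ExtAtom Bool)} (h : r' ∈ UpdProgram 2 Pw) :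
    r' = R1 ∨ r' = R2 ∨ r' = R3 ∨ r' = RA1 ∨ r' = RB1 ∨ r' = RA2 ∨ r' = RB2 := by
  rcases h with ((h | h) | h) | h
  · obtain ⟨i, hi, r, hr, hhead, rfl⟩ := h
    exfalso
    interval_cases i
    · have hr' : r = rr1 := by simpa [Pw, P1w, rr1] using hr
      subst hr'; simp [rr1] at hhead
    · have hr' : r = rr2 := by simpa [Pw, P2w, rr2] using hr
      subst hr'; simp [rr2] at hhead
  · obtain ⟨i, hi, r, hr, L, hL, rfl⟩ := h
    interval_cases i
    · have hr' : r = rr1 := by simpa [Pw, P1w, rr1] using hr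
      subst hr'
      have hL' : L = Lit.pos true := by have h2 := hL; simp [rr1] at h2; exact h2.symm
      subst hL'
      exact Or.inl (by simp [R1, rr1, liftLit, idxLit, Set.image_singleton])
    · have hr' : r = rr2 := by simpa [Pw, P2w, rr2] using hr
      subst hr'
      have hL' : L = Lit.pos false := by have h2 := hL; simp [rr2] at h2; exact h2.symm
      subst hL'
      exact Or.inr (Or.inl (by simp [R2, rr2, liftLit, idxLit, Set.image_empty]))
  · obtain ⟨i, hi, r, hr, L, hL, rfl⟩ := h
    have hi0 : i = 0 := by omega
    subst hi0
    have hr' : r = rr1 := by simpa [Pw, P1w, rr1] using hr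
    subst hr'
    have hL' : L = Lit.pos true := by have h2 := hL; simp [rr1] at h2; exact h2.symm
    subst hL'
    exact Or.inr (Or.inr (Or.inl (by
      simp [R3, rr1, liftLit, idxLit, Lit.compl, Set.image_singleton])))
  · obtain ⟨L, hocc, hcase⟩ := h
    rcases occ_char hocc with rfl | rfl
    · rcases hcase with ⟨i, hi, rfl⟩ | rfl
      · have hi0 : i = 0 := by omega
        subst hi0
        exact Or.inr (Or.inr (Or.inr (Or.inl (by simp [RA1, idxLit]))))
      · exact Or.inr (Or.inr (Or.inr (Or.inr (Or.inr (Or.inl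
          (by simp [RA2, liftLit, idxLit]))))))
    · rcases hcase with ⟨i, hi, rfl⟩ | rfl
      · have hi0 : i = 0 := by omega
        subst hi0
        exact Or.inr (Or.inr (Or.inr (Or.inr (Or.inl (by simp [RB1, idxLit])))))
      · exact Or.inr (Or.inr (Or.inr (Or.inr (Or.inr (Or.inr
          (by simp [RB2, liftLit, idxLit]))))))

end Aux

/-- postulate (U3) fails: `P_1` and `P_2` are each satisfiable
but the update sequence `(P_1, P_2)` has no update answer set. -/
theorem u3_fails :
    (∃ S : Set (Lit Bool), IsAnswerSet P1w S) ∧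
    (∃ S : Set (Lit Bool), IsAnswerSet P2w S) ∧
    ¬ ∃ S : Set (Lit Bool),
        UpdateAnswerSet 2 (fun i => if i = 0 then P1w else P2w) S := by
  refine ⟨⟨∅, ?_⟩, ⟨{Lit.pos false}, ?_⟩, ?_⟩
  · -- ∅ is an answer set of P1w
    refine ⟨fun a h => h.1, ?_, ?_⟩
    · rintro r' ⟨r, hr, hnd, rfl⟩ hb
      exfalso
      have hr' : r = Rule.mk (some (Lit.pos true)) {Lit.pos false} {Lit.pos true} := hr
      subst hr'
      exact hb.1 rfl
    · intro T hT _
      exact Set.subset_empty_iff.mp hT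
  · -- {b} is an answer set of P2w
    refine ⟨?_, ?_, ?_⟩
    · intro a ⟨h1, h2⟩
      simp at h2
    · rintro r' ⟨r, hr, hnd, rfl⟩ hb
      have hr' : r = Rule.mk (some (Lit.pos false)) ∅ ∅ := hr
      subst hr'
      exact ⟨Lit.pos false, rfl, rfl⟩
    · intro T hT hmod
      have hrin : Rule.mk (some (Lit.pos false)) (∅ : Set (Lit Bool)) ∅ ∈
          Reduct P2w {Lit.pos false} :=
        ⟨Rule.mk (some (Lit.pos false)) ∅ ∅, rfl,
          fun ⟨L, hL, _⟩ => Set.notMem_empty L hL, rfl⟩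
      have := hmod _ hrin ⟨Set.empty_subset T, fun x hx => absurd hx (Set.notMem_empty x)⟩
      obtain ⟨L, hL, hLT⟩ := this
      have hL' : L = Lit.pos false := Option.some.inj hL.symm
      subst hL'
      exact Set.Subset.antisymm hT (fun x hx => by
        rcases hx with rfl
        exact hLT)
  · -- no update answer set
    rintro ⟨S, S', hAS, -⟩
    have hAS : IsAnswerSet (UpdProgram 2 Pw) S' := hAS
    -- no negated literal is in S'
    have hneg : ∀ A : ExtAtom Bool, Lit.neg A ∉ S' := by
      intro A hA
      obtain ⟨r, hrP, -, hh, -⟩ := support hAS hA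
      rcases mem_upd hrP with rfl | rfl | rfl | rfl | rfl | rfl | rfl <;>
        simp [R1, R2, R3, RA1, RB1, RA2, RB2] at hh
    -- a_1 ∉ S'
    have ha1 : Lit.pos (ExtAtom.idx 1 true) ∉ S' := by
      intro h
      obtain ⟨r, hrP, -, hh, -⟩ := support hAS h
      rcases mem_upd hrP with rfl | rfl | rfl | rfl | rfl | rfl | rfl <;>
        simp [R1, R2, R3, RA1, RB1, RA2, RB2] at hh
    -- rej(1, r2) ∉ S'
    have hrj1 : Lit.pos (ExtAtom.rej 1 rr2) ∉ S' := by
      intro h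
      obtain ⟨r, hrP, -, hh, -⟩ := support hAS h
      rcases mem_upd hrP with rfl | rfl | rfl | rfl | rfl | rfl | rfl <;>
        simp [R1, R2, R3, RA1, RB1, RA2, RB2, rr1, rr2] at hh
    -- rej(0, r1) ∉ S'
    have hrj0 : Lit.pos (ExtAtom.rej 0 rr1) ∉ S' := by
      intro h
      obtain ⟨r, hrP, -, hh, hprem⟩ := support hAS h
      rcases mem_upd hrP with rfl | rfl | rfl | rfl | rfl | rfl | rfl <;>
        simp [R1, R2, R3, RA1, RB1, RA2, RB2, rr1, rr2] at hh
      -- remaining: r = R3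
      have : Lit.neg (ExtAtom.idx 1 true) ∈ S' \ {Lit.pos (ExtAtom.rej 0 rr1)} :=
        hprem (by simp [R3])
      exact hneg _ this.1
    -- b_1 ∈ S'
    have hb1 : Lit.pos (ExtAtom.idx 1 false) ∈ S' := by
      refine fires hAS memR2 ?_ (Set.empty_subset S') rfl
      rintro ⟨L, hL, hLS⟩
      simp only [R2, Set.mem_singleton_iff] at hL
      subst hL
      exact hrj1 hLS
    -- b_0 ∈ S'
    have hb0 : Lit.pos (ExtAtom.idx 0 false) ∈ S' := by
      refine fires hAS memRB1 ?_ ?_ rfl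
      · rintro ⟨L, hL, -⟩
        exact Set.notMem_empty L hL
      · intro x hx
        rcases hx with rfl
        exact hb1
    -- b ∈ S'
    have hb : Lit.pos (ExtAtom.base false) ∈ S' := by
      refine fires hAS memRB2 ?_ ?_ rfl
      · rintro ⟨L, hL, -⟩
        exact Set.notMem_empty L hL
      · intro x hx
        rcases hx with rfl
        exact hb0
    by_cases ha : Lit.pos (ExtAtom.base true) ∈ S'
    · -- a ∈ S': support of a forces a_0 ∈ S', whose support forces a ∉ S'
      obtain ⟨r, hrP, -, hh, hprem⟩ := support hAS ha
      rcases mem_upd hrP with rfl | rfl | rfl | rfl | rfl | rfl | rfl <;>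
        simp [R1, R2, R3, RA1, RB1, RA2, RB2, rr1, rr2] at hh
      -- remaining: r = RA2, so a_0 ∈ S'
      have ha0 : Lit.pos (ExtAtom.idx 0 true) ∈ S' :=
        (hprem (by simp [RA2])).1
      obtain ⟨r, hrP, hnd, hh, hprem2⟩ := support hAS ha0
      rcases mem_upd hrP with rfl | rfl | rfl | rfl | rfl | rfl | rfl <;>
        simp [R1, R2, R3, RA1, RB1, RA2, RB2, rr1, rr2] at hh
      -- remaining: r = R1 or r = RA1
      case _ =>
        -- r = R1 : defeated by a ∈ S'
        exact hnd ⟨Lit.pos (ExtAtom.base true), by simp [R1], ha⟩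
      case _ =>
        -- r = RA1 : needs a_1 ∈ S'
        exact ha1 (hprem2 (by simp [RA1])).1
    · -- a ∉ S': R1 fires giving a_0, then RA2 gives a, contradiction
      have ha0 : Lit.pos (ExtAtom.idx 0 true) ∈ S' := by
        refine fires hAS memR1 ?_ ?_ rfl
        · rintro ⟨L, hL, hLS⟩
          simp only [R1, Set.mem_union, Set.mem_singleton_iff] at hL
          rcases hL with rfl | rfl
          · exact ha hLS
          · exact hrj0 hLS
        · intro x hx
          rcases hx with rfl
          exact hb
      refine ha (fires hAS memRA2 ?_ ?_ rfl)
      · rintro ⟨L, hL, -⟩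
        exact Set.notMem_empty L hL
      · intro x hx
        rcases hx with rfl
        exact ha0
end

section
/- Update answer sets satisfy Cut (postulate N2): if every rule of Q belongs to Bel((P⃗, P_1)) and every rule of P_2 belongs to Bel((P⃗, P_1 ∪ Q)), then every rule of P_2 belongs to Bel((P⃗, P_1)). -/
/-- The belief set of an update sequence: all rules true in every update
answer set. -/
def BelSeq {α : Type} (n : ℕ) (P : ℕ → Set (Rule α)) : Set (Rule α) :=
  { r | ∀ S, UpdateAnswerSet n P S → RuleTrue S r }

/-- Append one program to a sequence of length `n`. -/
def append1 {α : Type} (n : ℕ) (P : ℕ → Set (Rule α)) (Q : Set (Rule α)) :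
    ℕ → Set (Rule α) :=
  fun i => if i < n then P i else Q


/-! An update answer set `S` of `(P⃗, P₁)` is the restriction of an answer set `S'` of the update
program. Let `H` be the set of heads of the rules of `Q` whose bodies hold in `S`; as `Q ⊆ Bel`,
`H ⊆ S`. Then `S'` together with the copies `L_i` (`i ≤ n`, `L ∈ H`) is an answer set of the
update program of `(P⃗, P₁ ∪ Q)`, with the same restriction `S`. The copies are forced, since rules
of the last program are never rejected and inertia carries `L_n` down to `L_0`; through inertia
they only derive literals of `S`; and a new premise `(compl L)_{i+1}` can fire a rejection rule only
if that rejection already holds, for otherwise the unrejected rule would put `L` into `S` next to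
its complement. -/

section AnswerSets

variable {β : Type} {P P' : Set (Rule β)} {S S'' T : Set (Lit β)}

@[simp] lemma headTrue_mk_some {L : Lit β} {p nb : Set (Lit β)} :
    HeadTrue S (Rule.mk (some L) p nb) ↔ L ∈ S := by
  simp [HeadTrue]

lemma isModel_reduct_iff :
    IsModel T (Reduct P S) ↔ ∀ r ∈ P, ¬ Defeated S r → r.prem ⊆ T → HeadTrue T r := by
  constructor
  · exact fun h r hr hd hprem =>
      h (Rule.mk r.head r.prem ∅) ⟨r, hr, hd, rfl⟩ ⟨hprem, fun _ h => h.elim⟩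
  · rintro h _ ⟨r, hr, hd, rfl⟩ hbody
    exact h r hr hd hbody.1

lemma IsAnswerSet.exists_rule_of_mem (hS : IsAnswerSet P S) {L : Lit β} (hL : L ∈ S) :
    ∃ r ∈ P, ¬ Defeated S r ∧ r.head = some L := by
  by_contra! hno
  have hdel : S \ {L} = S := by
    refine hS.2.2 _ Set.sdiff_subset (isModel_reduct_iff.2 fun r hr hd hprem => ?_)
    obtain ⟨L', hL', hL'S⟩ := isModel_reduct_iff.1 hS.2.1 r hr hd (hprem.trans Set.sdiff_subset)
    exact ⟨L', hL', hL'S, fun h => hno r hr hd (h ▸ hL')⟩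
  rw [← hdel] at hL
  exact hL.2 rfl

lemma IsAnswerSet.subset_of_isModel_reduct (hS : IsAnswerSet P S) (hPP' : P ⊆ P')
    (hdef : ∀ r ∈ P, ¬ Defeated S r → ¬ Defeated S'' r) (hT : IsModel T (Reduct P' S'')) :
    S ⊆ T := by
  refine Set.inter_eq_right.1 (hS.2.2 _ Set.inter_subset_right
    (isModel_reduct_iff.2 fun r hr hd hprem => ?_))
  obtain ⟨L, hL, hLT⟩ :=
    isModel_reduct_iff.1 hT r (hPP' hr) (hdef r hr hd) (hprem.trans Set.inter_subset_left)
  obtain ⟨L', hL', hL'S⟩ :=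
    isModel_reduct_iff.1 hS.2.1 r hr hd (hprem.trans Set.inter_subset_right)
  obtain rfl : L = L' := Option.some_injective _ (hL.symm.trans hL')
  exact ⟨L, hL, hLT, hL'S⟩

end AnswerSets

section Literals

variable {α : Type} {L L' : Lit α} {i j : ℕ} {r : Rule α}

@[simp] lemma idxLit_ne_liftLit : idxLit i L ≠ liftLit L' := by
  cases L <;> cases L' <;> simp [liftLit, idxLit]

@[simp] lemma liftLit_ne_idxLit : liftLit L' ≠ idxLit i L :=
  idxLit_ne_liftLit.symm

@[simp] lemma liftLit_ne_pos_rej : liftLit L ≠ .pos (.rej j r) := by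
  cases L <;> simp [liftLit]

@[simp] lemma idxLit_ne_pos_rej : idxLit i L ≠ .pos (.rej j r) := by
  cases L <;> simp [idxLit]

@[simp] lemma pos_rej_ne_idxLit : .pos (.rej j r) ≠ idxLit i L :=
  idxLit_ne_pos_rej.symm

@[simp] lemma idxLit_inj : idxLit i L = idxLit j L' ↔ i = j ∧ L = L' := by
  cases L <;> cases L' <;> simp [idxLit]

lemma Consistent.liftLit_compl_not_mem {S' : Set (Lit (ExtAtom α))} (h : Consistent S')
    (hL : liftLit L ∈ S') : liftLit L.compl ∉ S' := by
  cases L with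
  | pos a => exact fun hc => h (.base a) ⟨hL, hc⟩
  | neg a => exact fun hc => h (.base a) ⟨hc, hL⟩

variable {S' : Set (Lit (ExtAtom α))} {I : Set ℕ} {H : Set (Lit α)} {ℓ : Lit (ExtAtom α)}

lemma mem_of_mem_union_image2_idxLit (hℓ : ℓ ∈ S' ∪ Set.image2 idxLit I H)
    (hne : ∀ i L, idxLit i L ≠ ℓ) : ℓ ∈ S' :=
  hℓ.resolve_right fun ⟨i, _, L, _, hEq⟩ => hne i L hEq

@[simp] lemma liftLit_mem_union_image2_idxLit :
    liftLit L ∈ S' ∪ Set.image2 idxLit I H ↔ liftLit L ∈ S' :=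
  ⟨fun h => mem_of_mem_union_image2_idxLit h fun _ _ => idxLit_ne_liftLit, Or.inl⟩

lemma preimage_liftLit_union_image2_idxLit :
    liftLit ⁻¹' (S' ∪ Set.image2 idxLit I H) = liftLit ⁻¹' S' :=
  Set.ext fun _ => liftLit_mem_union_image2_idxLit

lemma image_liftLit_subset_union_image2_idxLit {A : Set (Lit α)} :
    liftLit '' A ⊆ S' ∪ Set.image2 idxLit I H ↔ liftLit '' A ⊆ S' := by
  rw [Set.image_subset_iff, Set.image_subset_iff, preimage_liftLit_union_image2_idxLit]

end Literals

section UpdProgram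

variable {α : Type} {N i : ℕ} {P P' : ℕ → Set (Rule α)} {r : Rule α} {L : Lit α}
  {S T : Set (Lit (ExtAtom α))}

lemma constraint_mem_updProgram (hi : i < N) (hr : r ∈ P i) (hh : r.head = none) :
    Rule.mk none (liftLit '' r.prem) (liftLit '' r.nbody) ∈ UpdProgram N P :=
  Or.inl (Or.inl (Or.inl ⟨i, hi, r, hr, hh, rfl⟩))

lemma idxRule_mem_updProgram (hi : i < N) (hr : r ∈ P i) (hh : r.head = some L) :
    Rule.mk (some (idxLit i L)) (liftLit '' r.prem)
      (liftLit '' r.nbody ∪ {.pos (.rej i r)}) ∈ UpdProgram N P :=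
  Or.inl (Or.inl (Or.inr ⟨i, hi, r, hr, L, hh, rfl⟩))

lemma rejRule_mem_updProgram (hi : i + 1 < N) (hr : r ∈ P i) (hh : r.head = some L) :
    Rule.mk (some (.pos (.rej i r))) (liftLit '' r.prem ∪ {idxLit (i + 1) L.compl})
      (liftLit '' r.nbody) ∈ UpdProgram N P :=
  Or.inl (Or.inr ⟨i, hi, r, hr, L, hh, rfl⟩)

lemma updProgram_mono (h : ∀ i, P i ⊆ P' i) : UpdProgram N P ⊆ UpdProgram N P' := by
  have hocc : ∀ L, OccursIn N P L → OccursIn N P' L :=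
    fun _ ⟨i, hi, r, hr, hx⟩ => ⟨i, hi, r, h i hr, hx⟩
  rintro _ (((⟨i, hi, r, hr, rest⟩ | ⟨i, hi, r, hr, rest⟩) | ⟨i, hi, r, hr, rest⟩) |
    ⟨L, hL, rest⟩)
  · exact Or.inl (Or.inl (Or.inl ⟨i, hi, r, h i hr, rest⟩))
  · exact Or.inl (Or.inl (Or.inr ⟨i, hi, r, h i hr, rest⟩))
  · exact Or.inl (Or.inr ⟨i, hi, r, h i hr, rest⟩)
  · exact Or.inr ⟨L, hocc L hL, rest⟩

lemma ne_idxLit_of_mem_nbody {r'' : Rule (ExtAtom α)} {ℓ : Lit (ExtAtom α)}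
    (hr'' : r'' ∈ UpdProgram N P) (hℓ : ℓ ∈ r''.nbody) (i : ℕ) (L : Lit α) : idxLit i L ≠ ℓ := by
  rcases hr'' with ((⟨_, _, _, _, _, rfl⟩ | ⟨_, _, _, _, _, _, rfl⟩) | ⟨_, _, _, _, _, _, rfl⟩) |
    ⟨_, _, ⟨_, _, rfl⟩ | rfl⟩
  · obtain ⟨L', -, rfl⟩ := hℓ; simp
  · rcases hℓ with ⟨L', -, rfl⟩ | rfl <;> simp
  · obtain ⟨L', -, rfl⟩ := hℓ; simp
  · simp at hℓ
  · simp at hℓ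

lemma defeated_union_image2_idxLit_iff {I : Set ℕ} {H : Set (Lit α)} {r'' : Rule (ExtAtom α)}
    (hr'' : r'' ∈ UpdProgram N P) :
    Defeated (S ∪ Set.image2 idxLit I H) r'' ↔ Defeated S r'' :=
  ⟨fun ⟨ℓ, hℓ, hmem⟩ =>
      ⟨ℓ, hℓ, mem_of_mem_union_image2_idxLit hmem (ne_idxLit_of_mem_nbody hr'' hℓ)⟩,
    fun ⟨ℓ, hℓ, hmem⟩ => ⟨ℓ, hℓ, Or.inl hmem⟩⟩

lemma IsModel.idxLit_mem_of_succ (hT : IsModel T (Reduct (UpdProgram N P) S))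
    (hocc : OccursIn N P L) (hi : i + 1 < N) (h : idxLit (i + 1) L ∈ T) : idxLit i L ∈ T :=
  headTrue_mk_some.1 <| isModel_reduct_iff.1 hT _ (Or.inr ⟨L, hocc, Or.inl ⟨i, hi, rfl⟩⟩)
    (by simp [Defeated]) (by simpa using h)

lemma IsModel.liftLit_mem_of_idxLit_zero (hT : IsModel T (Reduct (UpdProgram N P) S))
    (hocc : OccursIn N P L) (h : idxLit 0 L ∈ T) : liftLit L ∈ T :=
  headTrue_mk_some.1 <| isModel_reduct_iff.1 hT _ (Or.inr ⟨L, hocc, Or.inr rfl⟩)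
    (by simp [Defeated]) (by simpa using h)

lemma IsAnswerSet.pos_rej_not_mem (hS : IsAnswerSet (UpdProgram N P) S) (hi : N ≤ i + 1) :
    Lit.pos (.rej i r) ∉ S := by
  intro hmem
  obtain ⟨r'', hr'', -, hh⟩ := hS.exists_rule_of_mem hmem
  rcases hr'' with ((⟨_, _, _, _, _, rfl⟩ | ⟨_, _, _, _, _, _, rfl⟩) | ⟨j, hj, _, _, _, _, rfl⟩) |
    ⟨_, _, ⟨_, _, rfl⟩ | rfl⟩ <;> simp at hh
  omega

lemma IsAnswerSet.lt_and_occursIn_of_idxLit_mem (hS : IsAnswerSet (UpdProgram N P) S)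
    (h : idxLit i L ∈ S) : i < N ∧ OccursIn N P L := by
  obtain ⟨r'', hr'', -, hh⟩ := hS.exists_rule_of_mem h
  rcases hr'' with ((⟨_, _, _, _, _, rfl⟩ | ⟨j, hj, r, hr, L', hL', rfl⟩) |
    ⟨_, _, _, _, _, _, rfl⟩) | ⟨L', hocc, ⟨j, hj, rfl⟩ | rfl⟩ <;> simp at hh
  · obtain ⟨rfl, rfl⟩ := hh
    exact ⟨hj, j, hj, r, hr, Or.inl hL'⟩
  · obtain ⟨rfl, rfl⟩ := hh
    exact ⟨by omega, hocc⟩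

lemma IsAnswerSet.liftLit_mem_of_idxLit_mem (hS : IsAnswerSet (UpdProgram N P) S)
    (h : idxLit i L ∈ S) : liftLit L ∈ S := by
  induction i with
  | zero => exact hS.2.1.liftLit_mem_of_idxLit_zero (hS.lt_and_occursIn_of_idxLit_mem h).2 h
  | succ i ih =>
    obtain ⟨hi, hocc⟩ := hS.lt_and_occursIn_of_idxLit_mem h
    exact ih (hS.2.1.idxLit_mem_of_succ hocc hi h)

lemma IsAnswerSet.pos_rej_mem_of_liftLit_compl_mem (hS : IsAnswerSet (UpdProgram N P) S)
    (hi : i < N) (hr : r ∈ P i) (hh : r.head = some L) (hprem : liftLit '' r.prem ⊆ S)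
    (hnb : ∀ ℓ ∈ liftLit '' r.nbody, ℓ ∉ S) (hc : liftLit L.compl ∈ S) :
    Lit.pos (.rej i r) ∈ S := by
  by_contra hrej
  have hLi : idxLit i L ∈ S := by
    refine headTrue_mk_some.1 (isModel_reduct_iff.1 hS.2.1 _
      (idxRule_mem_updProgram hi hr hh) ?_ hprem)
    rintro ⟨ℓ, hℓ | rfl, hmem⟩
    exacts [hnb ℓ hℓ hmem, hrej hmem]
  exact hS.1.liftLit_compl_not_mem (hS.liftLit_mem_of_idxLit_mem hLi) hc

end UpdProgram

section Append

variable {α : Type} {n i : ℕ} {P : ℕ → Set (Rule α)} {A B : Set (Rule α)} {r : Rule α}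

lemma append1_subset_append1 (h : A ⊆ B) (i : ℕ) : append1 n P A i ⊆ append1 n P B i := by
  unfold append1
  split_ifs
  exacts [subset_rfl, h]

lemma mem_append1_union (h : r ∈ append1 n P (A ∪ B) i) :
    r ∈ append1 n P A i ∨ n ≤ i ∧ r ∈ B := by
  unfold append1 at *
  split_ifs at * with hi
  exacts [Or.inl h, h.imp id fun hB => ⟨not_lt.1 hi, hB⟩]

lemma mem_append1_self (h : r ∈ A) : r ∈ append1 n P A n := by
  simp [append1, h]

end Append

section Extension

variable {α : Type} {n : ℕ} {P : ℕ → Set (Rule α)} {P1 Q : Set (Rule α)}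
  {S' : Set (Lit (ExtAtom α))}

def firedHeads (Q : Set (Rule α)) (S : Set (Lit α)) : Set (Lit α) :=
  {L | ∃ r ∈ Q, r.head = some L ∧ BodyTrue S r}

lemma firedHeads_subset {S : Set (Lit α)} (hQ : ∀ r ∈ Q, RuleTrue S r) : firedHeads Q S ⊆ S := by
  rintro L ⟨r, hr, hh, hb⟩
  obtain ⟨L', hL', hL'S⟩ := hQ r hr hb
  obtain rfl : L = L' := Option.some_injective _ (hh.symm.trans hL')
  exact hL'S

lemma bodyTrue_preimage_liftLit {r : Rule α} {r'' : Rule (ExtAtom α)} {S : Set (Lit (ExtAtom α))}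
    (hprem : liftLit '' r.prem ⊆ S) (hnb : liftLit '' r.nbody ⊆ r''.nbody)
    (hd : ¬ Defeated S r'') : BodyTrue (liftLit ⁻¹' S) r :=
  ⟨Set.image_subset_iff.1 hprem, fun _ hL hLS => hd ⟨_, hnb (Set.mem_image_of_mem _ hL), hLS⟩⟩

lemma consistent_union_image2_idxLit {N : ℕ} {I : Set ℕ} {H : Set (Lit α)}
    (hS' : IsAnswerSet (UpdProgram N P) S') (hH : H ⊆ liftLit ⁻¹' S') :
    Consistent (S' ∪ Set.image2 idxLit I H) := by
  have hidx : ∀ i L, idxLit i L ∈ S' ∪ Set.image2 idxLit I H → liftLit L ∈ S' := by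
    rintro i L (h | ⟨_, -, L', hL', hEq⟩)
    · exact hS'.liftLit_mem_of_idxLit_mem h
    · obtain ⟨-, rfl⟩ := idxLit_inj.1 hEq
      exact hH hL'
  rintro a ⟨hpos, hneg⟩
  cases a with
  | idx i a => exact hS'.1 (.base a) ⟨hidx i (.pos a) hpos, hidx i (.neg a) hneg⟩
  | _ =>
    exact hS'.1 _ ⟨mem_of_mem_union_image2_idxLit hpos (by intro j L; cases L <;> simp [idxLit]),
      mem_of_mem_union_image2_idxLit hneg (by intro j L; cases L <;> simp [idxLit])⟩

lemma IsAnswerSet.headTrue_union_image2_idxLit {N : ℕ} {I : Set ℕ} {H : Set (Lit α)}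
    {r'' : Rule (ExtAtom α)} (hS' : IsAnswerSet (UpdProgram N P) S')
    (hr'' : r'' ∈ UpdProgram N P) (hd : ¬ Defeated (S' ∪ Set.image2 idxLit I H) r'')
    (hprem : r''.prem ⊆ S') : HeadTrue (S' ∪ Set.image2 idxLit I H) r'' :=
  have ⟨L, hL, hLS⟩ := isModel_reduct_iff.1 hS'.2.1 r'' hr''
    (fun h => hd ((defeated_union_image2_idxLit_iff hr'').2 h)) hprem
  ⟨L, hL, Or.inl hLS⟩

theorem isModel_reduct_union_image2_idxLit_firedHeads
    (hS' : IsAnswerSet (UpdProgram (n + 1) (append1 n P P1)) S')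
    (hQ : ∀ r ∈ Q, RuleTrue (liftLit ⁻¹' S') r) :
    IsModel (S' ∪ Set.image2 idxLit (Set.Iic n) (firedHeads Q (liftLit ⁻¹' S')))
      (Reduct (UpdProgram (n + 1) (append1 n P (P1 ∪ Q)))
        (S' ∪ Set.image2 idxLit (Set.Iic n) (firedHeads Q (liftLit ⁻¹' S')))) := by
  set H := firedHeads Q (liftLit ⁻¹' S')
  have hH : H ⊆ liftLit ⁻¹' S' := firedHeads_subset hQ
  have hlift : liftLit ⁻¹' (S' ∪ Set.image2 idxLit (Set.Iic n) H) = liftLit ⁻¹' S' :=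
    preimage_liftLit_union_image2_idxLit
  refine isModel_reduct_iff.2 fun r'' hr'' hd hprem => ?_
  rcases hr'' with ((⟨i, hi, r, hr, hh, rfl⟩ | ⟨i, hi, r, hr, L, hh, rfl⟩) |
    ⟨i, hi, r, hr, L, hh, rfl⟩) | ⟨L, -, ⟨i, hi, rfl⟩ | rfl⟩
  · have hprem' := image_liftLit_subset_union_image2_idxLit.1 hprem
    rcases mem_append1_union hr with hr | ⟨-, hr⟩
    · exact hS'.headTrue_union_image2_idxLit (constraint_mem_updProgram hi hr hh) hd hprem'
    · obtain ⟨L, hL, -⟩ := hQ r hr (hlift ▸ bodyTrue_preimage_liftLit hprem subset_rfl hd)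
      simp [hh] at hL
  · have hprem' := image_liftLit_subset_union_image2_idxLit.1 hprem
    rcases mem_append1_union hr with hr | ⟨-, hr⟩
    · exact hS'.headTrue_union_image2_idxLit (idxRule_mem_updProgram hi hr hh) hd hprem'
    · have hb := hlift ▸ bodyTrue_preimage_liftLit hprem Set.subset_union_left hd
      exact headTrue_mk_some.2 (Or.inr ⟨i, Set.mem_Iic.2 (by omega), L, ⟨r, hr, hh, hb⟩, rfl⟩)
  · have hr : r ∈ append1 n P P1 i := (mem_append1_union hr).resolve_right fun h => by omega
    have hpremL := image_liftLit_subset_union_image2_idxLit.1 (Set.union_subset_iff.1 hprem).1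
    rcases (Set.union_subset_iff.1 hprem).2 rfl with hc | ⟨_, -, L', hL', hEq⟩
    · exact hS'.headTrue_union_image2_idxLit (rejRule_mem_updProgram hi hr hh) hd
        (Set.union_subset hpremL (Set.singleton_subset_iff.2 hc))
    · obtain ⟨-, rfl⟩ := idxLit_inj.1 hEq
      exact headTrue_mk_some.2 (Or.inl (hS'.pos_rej_mem_of_liftLit_compl_mem (by omega) hr hh
        hpremL (fun ℓ hℓ hmem => hd ⟨ℓ, hℓ, Or.inl hmem⟩) (hH hL')))
  · rcases hprem rfl with h | ⟨_, -, L', hL', hEq⟩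
    · obtain ⟨hi', hocc⟩ := hS'.lt_and_occursIn_of_idxLit_mem h
      exact headTrue_mk_some.2 (Or.inl (hS'.2.1.idxLit_mem_of_succ hocc hi' h))
    · obtain ⟨-, rfl⟩ := idxLit_inj.1 hEq
      exact headTrue_mk_some.2 (Or.inr ⟨i, Set.mem_Iic.2 (by omega), L', hL', rfl⟩)
  · rcases hprem rfl with h | ⟨_, -, L', hL', hEq⟩
    · exact headTrue_mk_some.2 (Or.inl (hS'.liftLit_mem_of_idxLit_mem h))
    · obtain ⟨-, rfl⟩ := idxLit_inj.1 hEq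
      exact headTrue_mk_some.2 (Or.inl (hH hL'))

theorem eq_union_image2_idxLit_firedHeads_of_isModel_reduct {T : Set (Lit (ExtAtom α))}
    (hS' : IsAnswerSet (UpdProgram (n + 1) (append1 n P P1)) S')
    (hTS : T ⊆ S' ∪ Set.image2 idxLit (Set.Iic n) (firedHeads Q (liftLit ⁻¹' S')))
    (hT : IsModel T (Reduct (UpdProgram (n + 1) (append1 n P (P1 ∪ Q)))
      (S' ∪ Set.image2 idxLit (Set.Iic n) (firedHeads Q (liftLit ⁻¹' S'))))) :
    T = S' ∪ Set.image2 idxLit (Set.Iic n) (firedHeads Q (liftLit ⁻¹' S')) := by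
  have hS'T : S' ⊆ T := hS'.subset_of_isModel_reduct
    (updProgram_mono (append1_subset_append1 Set.subset_union_left))
    (fun r'' hr'' hd h => hd ((defeated_union_image2_idxLit_iff hr'').1 h)) hT
  refine hTS.antisymm (Set.union_subset hS'T ?_)
  rintro _ ⟨i, hi, L, ⟨r, hr, hh, hb⟩, rfl⟩
  have hrn : r ∈ append1 n P (P1 ∪ Q) n := mem_append1_self (Or.inr hr)
  have hocc : OccursIn (n + 1) (append1 n P (P1 ∪ Q)) L := ⟨n, n.lt_succ_self, r, hrn, Or.inl hh⟩
  have htop : idxLit n L ∈ T := by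
    refine headTrue_mk_some.1 (isModel_reduct_iff.1 hT _
      (idxRule_mem_updProgram n.lt_succ_self hrn hh) ?_ ?_)
    · rintro ⟨ℓ, ⟨L', hL', rfl⟩ | rfl, hmem⟩
      · exact hb.2 L' hL' (liftLit_mem_union_image2_idxLit.1 hmem)
      · exact hS'.pos_rej_not_mem le_rfl (mem_of_mem_union_image2_idxLit hmem fun _ _ => by simp)
    · exact Set.image_subset_iff.2 fun L' hL' => hS'T (hb.1 hL')
  exact Nat.decreasingInduction (motive := fun j _ => idxLit j L ∈ T)
    (fun j hj h => hT.idxLit_mem_of_succ hocc (by omega) h) htop hi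

theorem isAnswerSet_union_image2_idxLit_firedHeads
    (hS' : IsAnswerSet (UpdProgram (n + 1) (append1 n P P1)) S')
    (hQ : ∀ r ∈ Q, RuleTrue (liftLit ⁻¹' S') r) :
    IsAnswerSet (UpdProgram (n + 1) (append1 n P (P1 ∪ Q)))
      (S' ∪ Set.image2 idxLit (Set.Iic n) (firedHeads Q (liftLit ⁻¹' S'))) :=
  ⟨consistent_union_image2_idxLit hS' (firedHeads_subset hQ),
    isModel_reduct_union_image2_idxLit_firedHeads hS' hQ,
    fun _ => eq_union_image2_idxLit_firedHeads_of_isModel_reduct hS'⟩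

end Extension

/-- Cut, postulate N2: if `Q ⊆ Bel((P⃗, P_1))` and
`P_2 ⊆ Bel((P⃗, P_1 ∪ Q))`, then `P_2 ⊆ Bel((P⃗, P_1))`. -/
theorem cut_holds {α : Type} (n : ℕ) (Pseq : ℕ → Set (Rule α))
    (P1 Q P2 : Set (Rule α))
    (h1 : Q ⊆ BelSeq (n + 1) (append1 n Pseq P1))
    (h2 : P2 ⊆ BelSeq (n + 1) (append1 n Pseq (P1 ∪ Q))) :
    P2 ⊆ BelSeq (n + 1) (append1 n Pseq P1) := by
  rintro r hr _ ⟨S', hS', rfl⟩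
  have hQ : ∀ q ∈ Q, RuleTrue (liftLit ⁻¹' S') q := fun q hq => h1 hq _ ⟨S', hS', rfl⟩
  refine h2 hr _ ⟨_, isAnswerSet_union_image2_idxLit_firedHeads hS' hQ, ?_⟩
  exact preimage_liftLit_union_image2_idxLit.symm
end
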